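/- Let A be a Banach algebra and I a closed two-sided ideal of A possessing a bounded approximate identity. Then I is weakly amenable (every continuous derivation I → I* is inner) if and only if A is I-weakly amenable (every continuous derivation A → I* is inner). -/

import Mathlib

/-!
Let `(eᵢ)` be the bounded approximate identity of `I`.

If `D : A → I*` is a derivation agreeing on `I` with an inner derivation `ad f`, then
`Δ = D - ad f` is a derivation vanishing on `I`, so `Δ a · eᵢ = Δ (a eᵢ) - a · Δ eᵢ = 0`; as
`eᵢ x → x` this forces `Δ a = 0`.

Conversely, a derivation `D : I → I*` extends to `A` by `D̃ a = lim D (a eᵢ)` (pointwise on `I`).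
On products the limit exists because `D (a eᵢ) (y x) = D (x a eᵢ) y - D x (a eᵢ y)`; products are
dense in `I` and the net `D (a eᵢ)` is bounded, so it exists everywhere. Passing to the limit in the
derivation identity shows that `D̃` is a derivation extending `D`, and an `f` making `D̃` inner
makes `D` inner.
-/

open ContinuousLinearMap Filter Topology

namespace Paper

structure Bimod (A : Type*) [NormedRing A] [NormedAlgebra ℂ A]
    (X : Type*) [NormedAddCommGroup X] [NormedSpace ℂ X] where
  l : A → X →L[ℂ] X
  r : A → X →L[ℂ] X
  l_mul : ∀ a b x, l (a * b) x = l a (l b x)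
  r_mul : ∀ a b x, r (a * b) x = r b (r a x)
  lr : ∀ a b x, l a (r b x) = r b (l a x)

variable {A : Type*} [NormedRing A] [NormedAlgebra ℂ A]
variable {X : Type*} [NormedAddCommGroup X] [NormedSpace ℂ X]

noncomputable def Bimod.dual (M : Bimod A X) : Bimod A (X →L[ℂ] ℂ) where
  l a := (compL ℂ X X ℂ).flip (M.r a)
  r a := (compL ℂ X X ℂ).flip (M.l a)
  l_mul a b f := by ext x; simp [M.r_mul]
  r_mul a b f := by ext x; simp [M.l_mul]
  lr a b f := by ext x; simp [M.lr]

def IsDerivation (M : Bimod A X) (D : A →L[ℂ] X) : Prop :=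
  ∀ a b, D (a * b) = M.l a (D b) + M.r b (D a)

def IsInner (M : Bimod A X) (D : A →L[ℂ] X) : Prop :=
  ∃ x, ∀ a, D a = M.l a x - M.r a x

noncomputable def Bimod.restrict (M : Bimod A X) (Y : Submodule ℂ X)
    (hl : ∀ a, ∀ y ∈ Y, M.l a y ∈ Y) (hr : ∀ a, ∀ y ∈ Y, M.r a y ∈ Y) :
    Bimod A Y where
  l a := ((M.l a).comp Y.subtypeL).codRestrict Y fun y => hl a y y.2
  r a := ((M.r a).comp Y.subtypeL).codRestrict Y fun y => hr a y y.2
  l_mul a b y := Subtype.ext (M.l_mul a b y)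
  r_mul a b y := Subtype.ext (M.r_mul a b y)
  lr a b y := Subtype.ext (M.lr a b y)

noncomputable def algBimod (A : Type*) [NormedRing A] [NormedAlgebra ℂ A] : Bimod A A where
  l a := ContinuousLinearMap.mul ℂ A a
  r a := (ContinuousLinearMap.mul ℂ A).flip a
  l_mul a b x := mul_assoc a b x
  r_mul a b x := (mul_assoc x a b).symm
  lr a b x := (mul_assoc a x b).symm

noncomputable def idealBimod (I : Submodule ℂ A)
    (hL : ∀ a, ∀ x ∈ I, a * x ∈ I) (hR : ∀ a, ∀ x ∈ I, x * a ∈ I) :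
    Bimod A I where
  l a := ((ContinuousLinearMap.mul ℂ A a).comp I.subtypeL).codRestrict I fun x => hL a x x.2
  r a := (((ContinuousLinearMap.mul ℂ A).flip a).comp I.subtypeL).codRestrict I fun x => hR a x x.2
  l_mul a b x := Subtype.ext (mul_assoc a b (x : A))
  r_mul a b x := Subtype.ext (mul_assoc (x : A) a b).symm
  lr a b x := Subtype.ext (mul_assoc a (x : A) b).symm

end Paper

section BoundedNets

variable {𝕜 E F G : Type*} [NontriviallyNormedField 𝕜]
  [NormedAddCommGroup E] [NormedSpace 𝕜 E] [NormedAddCommGroup F] [NormedSpace 𝕜 F]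
  [NormedAddCommGroup G] [NormedSpace 𝕜 G]
  {ι : Type*} {p : Filter ι} [p.NeBot]

/-- Convergence of `f i z` is the Cauchy property `f i z - f j z → 0` along `p ×ˢ p`, and the
family `f i - f j` is equicontinuous. -/
theorem isClosed_setOf_exists_tendsto_apply [CompleteSpace G] {f : ι → F →L[𝕜] G} {C : ℝ}
    (hf : ∀ i z, ‖f i z‖ ≤ C * ‖z‖) :
    IsClosed {z | ∃ L, Tendsto (fun i => f i z) p (𝓝 L)} := by
  let g : ι × ι → F →L[𝕜] G := fun q => f q.1 - f q.2
  have hg : Equicontinuous fun q z => g q z :=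
    ((NormedSpace.equicontinuous_TFAE g).out 3 1).mp (⟨C + C, fun q z =>
      (norm_sub_le _ _).trans ((add_le_add (hf q.1 z) (hf q.2 z)).trans_eq (add_mul _ _ _).symm)⟩ :
        ∃ C, ∀ q z, ‖g q z‖ ≤ C * ‖z‖)
  have hcauchy : {z | ∃ L, Tendsto (fun i => f i z) p (𝓝 L)} =
      {z | Tendsto (fun q => g q z) (p ×ˢ p) (𝓝 ((0 : F → G) z))} := by
    ext z
    simp [← cauchy_map_iff_exists_tendsto, IsUniformAddGroup.cauchy_map_iff_tendsto, g,
      ‹p.NeBot›]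
  rw [hcauchy]
  exact hg.isClosed_setOfPred_tendsto continuous_const

theorem exists_tendsto_apply_apply_of_norm_le {T : ι → E →L[𝕜] F →L[𝕜] G} {C : ℝ}
    (hT : ∀ i a z, ‖T i a z‖ ≤ C * ‖a‖ * ‖z‖)
    (hconv : ∀ a z, ∃ L, Tendsto (fun i => T i a z) p (𝓝 L)) :
    ∃ S : E →L[𝕜] F →L[𝕜] G, ∀ a z, Tendsto (fun i => T i a z) p (𝓝 (S a z)) := by
  choose φ hφ using hconv
  have hbound : ∀ a z, ‖φ a z‖ ≤ C * ‖a‖ * ‖z‖ := fun a z =>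
    le_of_tendsto (hφ a z).norm (Eventually.of_forall fun i => hT i a z)
  refine ⟨(LinearMap.mk₂ 𝕜 φ ?_ ?_ ?_ ?_).mkContinuous₂ C hbound, hφ⟩
  · intro a b z
    exact tendsto_nhds_unique (hφ (a + b) z) (by simpa using (hφ a z).add (hφ b z))
  · intro c a z
    exact tendsto_nhds_unique (hφ (c • a) z) (by simpa using (hφ a z).const_smul c)
  · intro a z w
    exact tendsto_nhds_unique (hφ a (z + w)) (by simpa using (hφ a z).add (hφ a w))
  · intro c a z
    exact tendsto_nhds_unique (hφ a (c • z)) (by simpa using (hφ a z).const_smul c)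

omit [p.NeBot] in
theorem ContinuousLinearMap.tendsto_apply₂ (f : E →L[𝕜] F →L[𝕜] G) {g : ι → E} {h : ι → F}
    {x : E} {y : F} (hg : Tendsto g p (𝓝 x)) (hh : Tendsto h p (𝓝 y)) :
    Tendsto (fun i => f (g i) (h i)) p (𝓝 (f x y)) :=
  (f.continuous₂.tendsto (x, y)).comp (hg.prodMk_nhds hh)

end BoundedNets

namespace Paper

variable {A : Type*} [NormedRing A] [NormedAlgebra ℂ A]
variable {X : Type*} [NormedAddCommGroup X] [NormedSpace ℂ X]

namespace Bimod

theorem inner_derivation_mul (M : Bimod A X) (a b : A) (x : X) :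
    M.l (a * b) x - M.r (a * b) x = M.l a (M.l b x - M.r b x) + M.r b (M.l a x - M.r a x) := by
  rw [M.l_mul, M.r_mul, map_sub, map_sub, M.lr]
  abel

theorem eq_zero_of_forall_dual_r_eq_zero (M : Bimod A X) {ι : Type*} {p : Filter ι} [p.NeBot]
    {e : ι → A} (he : ∀ x, Tendsto (fun i => M.l (e i) x) p (𝓝 x)) {f : X →L[ℂ] ℂ}
    (hf : ∀ i, M.dual.r (e i) f = 0) : f = 0 := by
  ext x
  have hfe : ∀ i, f (M.l (e i) x) = 0 := fun i => DFunLike.congr_fun (hf i) x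
  exact tendsto_nhds_unique ((f.continuous.tendsto x).comp (he x))
    (by simp [Function.comp_def, hfe])

theorem eq_zero_of_isDerivation_of_eqOn_zero (M : Bimod A X) {Δ : A → X →L[ℂ] ℂ}
    (hΔ : ∀ a b, Δ (a * b) = M.dual.l a (Δ b) + M.dual.r b (Δ a))
    {J : Set A} (hJ : ∀ a, ∀ x ∈ J, a * x ∈ J) (hΔJ : ∀ x ∈ J, Δ x = 0)
    {ι : Type*} {p : Filter ι} [p.NeBot] {e : ι → A} (heJ : ∀ i, e i ∈ J)
    (he : ∀ x, Tendsto (fun i => M.l (e i) x) p (𝓝 x)) (a : A) : Δ a = 0 :=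
  M.eq_zero_of_forall_dual_r_eq_zero he fun i => by
    simpa [hΔJ _ (heJ i), hΔJ _ (hJ a _ (heJ i))] using (hΔ a (e i)).symm

end Bimod

section Ideal

variable (I : Submodule ℂ A) (hL : ∀ a : A, ∀ x ∈ I, a * x ∈ I) (hR : ∀ a : A, ∀ x ∈ I, x * a ∈ I)

local notation "𝓜" => idealBimod I hL hR

@[simp]
theorem idealBimod_l_coe (a : A) (x : I) : (((𝓜).l a x : I) : A) = a * x := rfl

@[simp]
theorem idealBimod_r_coe (a : A) (x : I) : (((𝓜).r a x : I) : A) = x * a := rfl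

theorem tendsto_idealBimod_l {ι : Type*} {p : Filter ι} {e : ι → I}
    (he : ∀ x : I, Tendsto (fun i => (e i : A) * x) p (𝓝 (x : A))) (x : I) :
    Tendsto (fun i => (𝓜).l (e i) x) p (𝓝 x) :=
  tendsto_subtype_rng.mpr (he x)

theorem isInner_of_eq_inner_on_ideal {ι : Type*} {p : Filter ι} [p.NeBot] {e : ι → I}
    (he_left : ∀ x : I, Tendsto (fun i => (e i : A) * x) p (𝓝 (x : A)))
    (D : A →L[ℂ] (I →L[ℂ] ℂ)) (hD : IsDerivation (𝓜).dual D) (f : I →L[ℂ] ℂ)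
    (hf : ∀ x : I, D x = (𝓜).dual.l x f - (𝓜).dual.r x f) : IsInner (𝓜).dual D := by
  refine ⟨f, fun a => sub_eq_zero.mp ?_⟩
  refine (𝓜).eq_zero_of_isDerivation_of_eqOn_zero
    (Δ := fun a => D a - ((𝓜).dual.l a f - (𝓜).dual.r a f)) (J := I) (fun a b => ?_) (hL ·) ?_
    (fun i => (e i).2) (tendsto_idealBimod_l I hL hR he_left) a
  · rw [hD, Bimod.inner_derivation_mul]
    simp only [map_sub]
    abel
  · exact fun x hx => sub_eq_zero.mpr (hf ⟨x, hx⟩)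

def IsIdealDerivation (D : I →L[ℂ] (I →L[ℂ] ℂ)) : Prop :=
  ∀ x y : I, D ⟨(x : A) * (y : A), hL x y y.2⟩ = (𝓜).dual.l (x : A) (D y) + (𝓜).dual.r (y : A) (D x)

variable {I hL hR} in
theorem IsIdealDerivation.apply_mul {D : I →L[ℂ] (I →L[ℂ] ℂ)} (hD : IsIdealDerivation I hL hR D)
    (x y z : I) : D ((𝓜).l x y) z = D y ((𝓜).r x z) + D x ((𝓜).l y z) :=
  congrArg (· z) (hD x y)

noncomputable def mulRightIdeal (e : I) : A →L[ℂ] I :=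
  ((ContinuousLinearMap.mul ℂ A).flip (e : A)).codRestrict I fun a => hL a e e.2

@[simp]
theorem mulRightIdeal_coe (e : I) (a : A) : (mulRightIdeal I hL e a : A) = a * e := rfl

variable {ι : Type*} {p : Filter ι} [p.NeBot] {e : ι → I}

omit [p.NeBot] in
theorem exists_norm_apply_mulRightIdeal_le (D : I →L[ℂ] (I →L[ℂ] ℂ)) {C : ℝ}
    (hC : ∀ i, ‖e i‖ ≤ C) :
    ∃ K, ∀ i a z, ‖D (mulRightIdeal I hL (e i) a) z‖ ≤ K * ‖a‖ * ‖z‖ := by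
  obtain ⟨K, hK0, hK⟩ := D.isBoundedBilinearMap.bound
  refine ⟨K * C, fun i a z => (hK _ z).trans ?_⟩
  have hae : ‖mulRightIdeal I hL (e i) a‖ ≤ ‖a‖ * C :=
    (norm_mul_le a (e i : A)).trans (mul_le_mul_of_nonneg_left (hC i) (norm_nonneg a))
  calc K * ‖mulRightIdeal I hL (e i) a‖ * ‖z‖ ≤ K * (‖a‖ * C) * ‖z‖ := by gcongr
    _ = K * C * ‖a‖ * ‖z‖ := by ring

omit [p.NeBot] in
theorem tendsto_apply_mulRightIdeal_mul
    (he_left : ∀ x : I, Tendsto (fun i => (e i : A) * x) p (𝓝 (x : A)))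
    (he_right : ∀ x : I, Tendsto (fun i => (x : A) * (e i : A)) p (𝓝 (x : A)))
    {D : I →L[ℂ] (I →L[ℂ] ℂ)} (hD : IsIdealDerivation I hL hR D) (a : A) (x y : I) :
    Tendsto (fun i => D (mulRightIdeal I hL (e i) a) ((𝓜).l y x)) p
      (𝓝 (D ((𝓜).r a x) y - D x ((𝓜).l a y))) := by
  have hxa : Tendsto (fun i => (𝓜).l x (mulRightIdeal I hL (e i) a)) p (𝓝 ((𝓜).r a x)) :=
    tendsto_subtype_rng.mpr <| by simpa [mul_assoc] using he_right ((𝓜).r a x)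
  have hay : Tendsto (fun i => (𝓜).l (mulRightIdeal I hL (e i) a) y) p (𝓝 ((𝓜).l a y)) :=
    tendsto_subtype_rng.mpr <| by simpa [mul_assoc] using (he_left y).const_mul a
  refine ((D.tendsto_apply₂ hxa tendsto_const_nhds).sub
    (D.tendsto_apply₂ tendsto_const_nhds hay)).congr fun i => ?_
  exact (eq_sub_of_add_eq (hD.apply_mul x _ y).symm).symm

theorem exists_tendsto_apply_mulRightIdeal
    (he_left : ∀ x : I, Tendsto (fun i => (e i : A) * x) p (𝓝 (x : A)))
    (he_right : ∀ x : I, Tendsto (fun i => (x : A) * (e i : A)) p (𝓝 (x : A)))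
    {C : ℝ} (hC : ∀ i, ‖e i‖ ≤ C)
    {D : I →L[ℂ] (I →L[ℂ] ℂ)} (hD : IsIdealDerivation I hL hR D) (a : A) (z : I) :
    ∃ L, Tendsto (fun i => D (mulRightIdeal I hL (e i) a) z) p (𝓝 L) := by
  obtain ⟨K, hK⟩ := exists_norm_apply_mulRightIdeal_le I hL D hC
  exact (isClosed_setOf_exists_tendsto_apply (f := fun i => D (mulRightIdeal I hL (e i) a))
    (hK · a)).mem_of_tendsto (tendsto_idealBimod_l I hL hR he_left z) <|
      Eventually.of_forall fun j =>
        ⟨_, tendsto_apply_mulRightIdeal_mul I hL hR he_left he_right hD a z (e j)⟩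

variable {D : I →L[ℂ] (I →L[ℂ] ℂ)} {S : A →L[ℂ] (I →L[ℂ] ℂ)}

omit [p.NeBot] in
theorem tendsto_mulRightIdeal_coe
    (he_right : ∀ x : I, Tendsto (fun i => (x : A) * (e i : A)) p (𝓝 (x : A))) (x : I) :
    Tendsto (fun i => mulRightIdeal I hL (e i) x) p (𝓝 x) :=
  tendsto_subtype_rng.mpr (he_right x)

theorem apply_coe_of_tendsto
    (he_right : ∀ x : I, Tendsto (fun i => (x : A) * (e i : A)) p (𝓝 (x : A)))
    (hS : ∀ a z, Tendsto (fun i => D (mulRightIdeal I hL (e i) a) z) p (𝓝 (S a z))) (x : I) :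
    S x = D x := by
  ext z
  exact tendsto_nhds_unique (hS x z)
    (D.tendsto_apply₂ (tendsto_mulRightIdeal_coe I hL he_right x) tendsto_const_nhds)

theorem apply_idealBimod_l_of_tendsto
    (he_left : ∀ x : I, Tendsto (fun i => (e i : A) * x) p (𝓝 (x : A)))
    (he_right : ∀ x : I, Tendsto (fun i => (x : A) * (e i : A)) p (𝓝 (x : A)))
    (hD : IsIdealDerivation I hL hR D)
    (hS : ∀ a z, Tendsto (fun i => D (mulRightIdeal I hL (e i) a) z) p (𝓝 (S a z)))
    (a : A) (x z : I) : D ((𝓜).l a x) z = D x ((𝓜).r a z) + S a ((𝓜).l x z) := by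
  have hax : Tendsto (fun i => (𝓜).l (mulRightIdeal I hL (e i) a) x) p (𝓝 ((𝓜).l a x)) :=
    tendsto_subtype_rng.mpr <| by simpa [mul_assoc] using (he_left x).const_mul a
  have hza : Tendsto (fun i => (𝓜).r (mulRightIdeal I hL (e i) a) z) p (𝓝 ((𝓜).r a z)) :=
    tendsto_subtype_rng.mpr <| by simpa [mul_assoc] using he_right ((𝓜).r a z)
  refine tendsto_nhds_unique (D.tendsto_apply₂ hax tendsto_const_nhds) ?_
  refine ((D.tendsto_apply₂ tendsto_const_nhds hza).add (hS a _)).congr fun i => ?_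
  exact (hD.apply_mul _ x z).symm

theorem isDerivation_of_tendsto
    (he_left : ∀ x : I, Tendsto (fun i => (e i : A) * x) p (𝓝 (x : A)))
    (he_right : ∀ x : I, Tendsto (fun i => (x : A) * (e i : A)) p (𝓝 (x : A)))
    (hD : IsIdealDerivation I hL hR D)
    (hS : ∀ a z, Tendsto (fun i => D (mulRightIdeal I hL (e i) a) z) p (𝓝 (S a z))) :
    IsDerivation (𝓜).dual S := by
  intro a b
  ext z
  have hbz : Tendsto (fun i => (𝓜).l (mulRightIdeal I hL (e i) b) z) p (𝓝 ((𝓜).l b z)) :=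
    tendsto_subtype_rng.mpr <| by simpa [mul_assoc] using (he_left z).const_mul b
  refine tendsto_nhds_unique (hS (a * b) z) ?_
  refine ((hS b _).add (S.tendsto_apply₂ tendsto_const_nhds hbz)).congr fun i => ?_
  have hab : mulRightIdeal I hL (e i) (a * b) = (𝓜).l a (mulRightIdeal I hL (e i) b) :=
    Subtype.ext (mul_assoc a b (e i))
  rw [hab]
  exact (apply_idealBimod_l_of_tendsto I hL hR he_left he_right hD hS a _ z).symm

theorem exists_isDerivation_extension
    (he_left : ∀ x : I, Tendsto (fun i => (e i : A) * x) p (𝓝 (x : A)))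
    (he_right : ∀ x : I, Tendsto (fun i => (x : A) * (e i : A)) p (𝓝 (x : A)))
    {C : ℝ} (hC : ∀ i, ‖e i‖ ≤ C) (hD : IsIdealDerivation I hL hR D) :
    ∃ S : A →L[ℂ] (I →L[ℂ] ℂ), (∀ x : I, S x = D x) ∧ IsDerivation (𝓜).dual S := by
  obtain ⟨K, hK⟩ := exists_norm_apply_mulRightIdeal_le I hL D hC
  obtain ⟨S, hS⟩ := exists_tendsto_apply_apply_of_norm_le
    (T := fun i => D.comp (mulRightIdeal I hL (e i))) hK
    (exists_tendsto_apply_mulRightIdeal I hL hR he_left he_right hC hD)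
  exact ⟨S, apply_coe_of_tendsto I hL he_right hS,
    isDerivation_of_tendsto I hL hR he_left he_right hD hS⟩

end Ideal

theorem stmt_5
    {A : Type*} [NormedRing A] [NormedAlgebra ℂ A]
    (I : Submodule ℂ A)
    (hL : ∀ a : A, ∀ x ∈ I, a * x ∈ I) (hR : ∀ a : A, ∀ x ∈ I, x * a ∈ I)
    (bai : ∃ (ι : Type) (p : Filter ι) (e : ι → ↥I), p.NeBot ∧
        (∃ C : ℝ, ∀ i, ‖e i‖ ≤ C) ∧
        (∀ x : ↥I, Tendsto (fun i => (e i : A) * (x : A)) p (𝓝 (x : A)) ∧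
                   Tendsto (fun i => (x : A) * (e i : A)) p (𝓝 (x : A)))) :
    (∀ D : ↥I →L[ℂ] (↥I →L[ℂ] ℂ),
        (∀ x y : ↥I, D ⟨(x : A) * (y : A), hL x y y.2⟩ =
            (idealBimod I hL hR).dual.l (x : A) (D y) +
            (idealBimod I hL hR).dual.r (y : A) (D x)) →
        ∃ f : ↥I →L[ℂ] ℂ, ∀ x : ↥I,
          D x = (idealBimod I hL hR).dual.l (x : A) f -
                (idealBimod I hL hR).dual.r (x : A) f) ↔
    (∀ D : A →L[ℂ] (↥I →L[ℂ] ℂ),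
        IsDerivation (idealBimod I hL hR).dual D → IsInner (idealBimod I hL hR).dual D) := by
  obtain ⟨ι, p, e, hp, ⟨C, hC⟩, he⟩ := bai
  have he_left x := (he x).1
  have he_right x := (he x).2
  constructor
  · intro hI D hD
    obtain ⟨f, hf⟩ := hI (D.comp I.subtypeL) fun x y => hD x y
    exact isInner_of_eq_inner_on_ideal I hL hR he_left D hD f hf
  · intro hA D hD
    obtain ⟨S, hSD, hS⟩ := exists_isDerivation_extension I hL hR he_left he_right hC hD
    obtain ⟨f, hf⟩ := hA S hS
    exact ⟨f, fun x => hSD x ▸ hf x⟩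

end Paper
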